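/- Let n ≥ 5, ε ≤ 1/(n-1), and let w be a word over an n-letter alphabet all of whose factors have exponent at most n/(n-1). Suppose xyx and uvu are factors of w, each failing the strengthened bound (i.e., (|xyx|+ε)/|xy| > n/(n-1) and (|uvu|+ε)/|uv| > n/(n-1)), with |x| = |u|. Then |y| = |v|. -/

import Mathlib

open List

/-- `p` is a period of the word `w`. -/
def HasPeriod {α : Type*} (w : List α) (p : ℕ) : Prop :=
  1 ≤ p ∧ ∀ i, i + p < w.length → w[i]? = w[i + p]?

/-- minimal period of a word -/
noncomputable def per {α : Type*} (w : List α) : ℕ := sInf {p | _root_.HasPeriod w p}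

/-- local exponent of `w` is at most `q`: every nonempty factor has exponent ≤ q. -/
noncomputable def lexpLE {α : Type*} (w : List α) (q : ℚ) : Prop :=
  ∀ v : List α, v <:+: w → v ≠ [] → (v.length : ℚ) / per v ≤ q

/-- `v` is a (finite) factor of the infinite word `ω`. -/
def FactorOfInf {α : Type*} (v : List α) (ω : ℕ → α) : Prop :=
  ∃ i : ℕ, v = List.ofFn (fun j : Fin v.length => ω (i + j))

/-!
The minimal period of `x ++ y ++ x` is at most `|xy|`, so the threshold bound yields
`(n - 1) |x| ≤ |xy|`, while the failed strengthened bound yields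
`|xy| < (n - 1) |x| + (n - 1) ε ≤ (n - 1) |x| + 1`. Hence `|xy| = (n - 1) |x|` depends on `|x|`
only.
-/

section Words

variable {α : Type*}

lemma hasPeriod_append_append_self {x : List α} (y : List α) (hx : x ≠ []) :
    _root_.HasPeriod (x ++ y ++ x) (x ++ y).length := by
  have hx₀ : 0 < x.length := List.length_pos_iff.mpr hx
  refine ⟨by simp; omega, fun i hi => ?_⟩
  simp only [length_append] at hi
  rw [getElem?_append_left (by simp; omega), getElem?_append_left (by omega),
    getElem?_append_right (by omega)]
  congr 1
  omega

lemma HasPeriod.per_le {w : List α} {p : ℕ} (h : _root_.HasPeriod w p) : per w ≤ p :=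
  Nat.sInf_le h

lemma HasPeriod.one_le_per {w : List α} {p : ℕ} (h : _root_.HasPeriod w p) : 1 ≤ per w :=
  (Nat.sInf_mem (s := {p | _root_.HasPeriod w p}) ⟨p, h⟩).1

lemma lexpLE.length_div_le_of_hasPeriod {w v : List α} {q : ℚ} {p : ℕ} (hw : lexpLE w q)
    (hv : v <:+: w) (hv₀ : v ≠ []) (hp : _root_.HasPeriod v p) :
    (v.length : ℚ) / p ≤ q :=
  calc (v.length : ℚ) / p ≤ v.length / per v := by
        gcongr
        · exact_mod_cast hp.one_le_per
        · exact hp.per_le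
    _ ≤ q := hw v hv hv₀

end Words

lemma eq_pred_mul_of_div_bounds {n a p : ℕ} {ε : ℚ} (hn : 1 < n)
    (hε : ε ≤ 1 / ((n : ℚ) - 1)) (hp : 0 < p)
    (hle : ((p + a : ℕ) : ℚ) / p ≤ n / (n - 1))
    (hlt : (n : ℚ) / (n - 1) < (((p + a : ℕ) : ℚ) + ε) / p) :
    p = (n - 1) * a := by
  obtain ⟨k, rfl⟩ : ∃ k, n = k + 1 := ⟨n - 1, by omega⟩
  have hk : (0 : ℚ) < k := by exact_mod_cast (show 0 < k by omega)
  have hp' : (0 : ℚ) < p := by exact_mod_cast hp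
  push_cast at hε hle hlt ⊢
  rw [add_sub_cancel_right] at hε hle hlt
  rw [div_le_div_iff₀ hp' hk] at hle
  rw [div_lt_div_iff₀ hk hp'] at hlt
  have hkε : k * ε ≤ 1 := by rwa [le_div_iff₀ hk, mul_comm] at hε
  have lower : (k * a : ℚ) ≤ p := by nlinarith
  have upper : (p : ℚ) < k * a + 1 := by nlinarith
  have : k * a ≤ p := by exact_mod_cast lower
  have : p < k * a + 1 := by exact_mod_cast upper
  omega

lemma length_append_eq_of_lexpLE {n : ℕ} (hn : 1 < n) {ε : ℚ}
    (hε : ε ≤ 1 / ((n : ℚ) - 1)) {α : Type*} {w x y : List α}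
    (hw : lexpLE w ((n : ℚ) / (n - 1))) (hx : x ≠ [])
    (hfac : x ++ y ++ x <:+: w)
    (hbad : (n : ℚ) / (n - 1) < (((x ++ y ++ x).length : ℚ) + ε) / ((x ++ y).length : ℚ)) :
    (x ++ y).length = (n - 1) * x.length := by
  have hlen : (x ++ y ++ x).length = (x ++ y).length + x.length := length_append
  rw [hlen] at hbad
  refine eq_pred_mul_of_div_bounds hn hε (by simp [List.length_pos_iff.mpr hx]) ?_ hbad
  rw [← hlen]
  exact hw.length_div_le_of_hasPeriod hfac (by simp [hx])
    (hasPeriod_append_append_self y hx)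

theorem stmt9 (n : ℕ) (hn : 5 ≤ n) (ε : ℚ) (hε : ε ≤ 1 / ((n : ℚ) - 1))
    (w : List (Fin n)) (hthr : lexpLE w ((n : ℚ) / (n - 1)))
    (x y u v : List (Fin n)) (hx : x ≠ []) (hu : u ≠ [])
    (hfac1 : x ++ y ++ x <:+: w) (hfac2 : u ++ v ++ u <:+: w)
    (hbad1 : (n : ℚ) / (n - 1) < (((x ++ y ++ x).length : ℚ) + ε) / ((x ++ y).length : ℚ))
    (hbad2 : (n : ℚ) / (n - 1) < (((u ++ v ++ u).length : ℚ) + ε) / ((u ++ v).length : ℚ))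
    (hlen : x.length = u.length) :
    y.length = v.length := by
  have hn₁ : 1 < n := by omega
  have hxy := length_append_eq_of_lexpLE hn₁ hε hthr hx hfac1 hbad1
  have huv := length_append_eq_of_lexpLE hn₁ hε hthr hu hfac2 hbad2
  simp only [length_append, hlen] at hxy huv
  omega
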